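/- In ℤ[[q]] one has a(q)⁶·(q³;q³)_∞ ≡ a(q³)⁶·(q³;q³)_∞ + 9q·a(q³)⁵·(q⁹;q⁹)_∞³ (mod 27). -/

import Mathlib

/-- The Euler product `(q;q)_∞ = ∏_{k≥1} (1 - q^k)` as a formal power series over `ℤ`.
Its `n`-th coefficient agrees with that of any truncated product `∏_{k=1}^{N}(1-q^k)`
with `N ≥ n`. -/
noncomputable def eulerQ : PowerSeries ℤ :=
  PowerSeries.mk fun n =>
    PowerSeries.coeff n (∏ k ∈ Finset.range (n + 1), (1 - PowerSeries.X ^ (k + 1)))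

/-- Image of a power series under the substitution `q ↦ q^k` (intended for `k ≥ 1`). -/
noncomputable def substPow (k : ℕ) (f : PowerSeries ℤ) : PowerSeries ℤ :=
  PowerSeries.mk fun n => if k ∣ n then PowerSeries.coeff (n / k) f else 0

/-- Image of a power series under the substitution `q ↦ -q`. -/
noncomputable def substNeg (f : PowerSeries ℤ) : PowerSeries ℤ :=
  PowerSeries.rescale (-1 : ℤ) f

/-- Ramanujan's theta function `φ(q) = ∑_{n ∈ ℤ} q^{n²}`. -/
noncomputable def phiTheta : PowerSeries ℤ :=
  PowerSeries.mk fun n => (Set.ncard {m : ℤ | m ^ 2 = (n : ℤ)} : ℤ)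

/-- Ramanujan's theta function `ψ(q) = ∑_{n ≥ 0} q^{n(n+1)/2}`. -/
noncomputable def psiTheta : PowerSeries ℤ :=
  PowerSeries.mk fun n => (Set.ncard {m : ℕ | m * (m + 1) / 2 = n} : ℤ)

/-- The cubic theta function `a(q) = ∑_{m,n ∈ ℤ} q^{m² + mn + n²}`. -/
noncomputable def aCubic : PowerSeries ℤ :=
  PowerSeries.mk fun n =>
    (Set.ncard {p : ℤ × ℤ | p.1 ^ 2 + p.1 * p.2 + p.2 ^ 2 = (n : ℤ)} : ℤ)

/-- The theta function `X(q) = ∑_{n ∈ ℤ} q^{3n² + 2n}`. -/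
noncomputable def xTheta : PowerSeries ℤ :=
  PowerSeries.mk fun n => (Set.ncard {m : ℤ | 3 * m ^ 2 + 2 * m = (n : ℤ)} : ℤ)

/-- The quadratic form `Q(m₁,…,m₅) = ∑ mᵢ² + ∑_{i<j} mᵢ mⱼ`. -/
def frobQ (v : Fin 5 → ℤ) : ℤ :=
  (∑ i, v i ^ 2) + ∑ i, ∑ j, if i < j then v i * v j else 0

/-- The theta series `∑_{m₁,…,m₅ ∈ ℤ} q^{Q(m₁,…,m₅)}`. -/
noncomputable def frobTheta : PowerSeries ℤ :=
  PowerSeries.mk fun n => (Set.ncard {v : Fin 5 → ℤ | frobQ v = (n : ℤ)} : ℤ)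

/-- The 6-colored generalized Frobenius partition function `cφ₆(n)`, defined by
`∑_{n≥0} cφ₆(n) qⁿ = (q;q)_∞^{-6} · ∑_{m₁,…,m₅} q^{Q(m₁,…,m₅)}`; here `(q;q)_∞^{-1}` is
realized via `PowerSeries.invOfUnit` (the constant coefficient of `eulerQ` is `1`). -/
noncomputable def cphi6 (n : ℕ) : ℤ :=
  PowerSeries.coeff n (PowerSeries.invOfUnit eulerQ 1 ^ 6 * frobTheta)

/-!
Split the lattice points of `m² + mn + n²` by their residues mod 3. The points with `m ≡ n`
give `a(q³)`; the rotation `(m, n) ↦ (-n, m + n)` preserves the form and permutes the six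
other classes, so `a(q) = a(q³) + 6 D(q)` with `D` the theta series of the class `(1, 0)`.
Writing `(m, n) = (3y + 1, 3x)` gives `D(q) = q C(q³)`, where `C` is the theta series of
`3(x² + xy + y²) + x + 2y`. Modulo 27, `(a(q³) + 6D)⁶ ≡ a(q³)⁶ + 36 a(q³)⁵ D` and `36 ≡ 9`,
so it remains to prove `C(q) (q; q)_∞ = (q³; q³)_∞³`. For this, compare the coefficients of
`z^{3M}` in `(-z; q)_{3R} = (-z; q³)_R (-qz; q³)_R (-q²z; q³)_R`, evaluate each of them by the
finite `q`-binomial theorem, and let `R` and `M` grow.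
-/

open PowerSeries Finset.HasAntidiagonal

section Pochhammer

variable {A : Type*} [CommRing A]

lemma SModEq.of_mul_eq_one {I : Ideal A} {x y x' y' : A} (h : x ≡ y [SMOD I])
    (hx : x * x' = 1) (hy : y * y' = 1) : x' ≡ y' [SMOD I] :=
  calc x' = x' * (y * y') := by rw [hy, mul_one]
    _ ≡ x' * (x * y') [SMOD I] := SModEq.rfl.mul (h.symm.mul SModEq.rfl)
    _ = y' := by rw [← mul_assoc, mul_comm x', hx, one_mul]

/-- `(a; a)_m`. -/
def qPochhammer (a : A) (m : ℕ) : A :=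
  ∏ k ∈ Finset.range m, (1 - a ^ (k + 1))

/-- `(-z; a)_R`, a polynomial in `z`. -/
noncomputable def zPochhammer (a : A) (R : ℕ) : Polynomial A :=
  ∏ x ∈ Finset.range R, (1 + Polynomial.C (a ^ x) * Polynomial.X)

lemma zPochhammer_comp_C_mul_X (a b : A) (R : ℕ) :
    (zPochhammer a R).comp (Polynomial.C b * Polynomial.X) =
      ∏ x ∈ Finset.range R, (1 + Polynomial.C (a ^ x * b) * Polynomial.X) := by
  simp [zPochhammer, Polynomial.prod_comp, mul_assoc]

lemma coeff_zPochhammer_comp_C_mul_X (a b : A) (R m : ℕ) :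
    ((zPochhammer a R).comp (Polynomial.C b * Polynomial.X)).coeff m =
      (zPochhammer a R).coeff m * b ^ m :=
  Polynomial.comp_C_mul_X_coeff

lemma one_add_X_mul_zPochhammer_comp (a : A) (R : ℕ) :
    (1 + Polynomial.X) * (zPochhammer a R).comp (Polynomial.C a * Polynomial.X) =
      zPochhammer a R * (1 + Polynomial.C (a ^ R) * Polynomial.X) := by
  rw [zPochhammer_comp_C_mul_X, zPochhammer, ← Finset.prod_range_succ, Finset.prod_range_succ']
  simp only [pow_zero, map_one, one_mul, pow_succ, mul_comm]

lemma coeff_zPochhammer_succ_mul (a : A) (R m : ℕ) :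
    (zPochhammer a R).coeff (m + 1) * (1 - a ^ (m + 1)) =
      (a ^ m - a ^ R) * (zPochhammer a R).coeff m := by
  have h := congrArg (Polynomial.coeff · (m + 1)) (one_add_X_mul_zPochhammer_comp a R)
  simp only [add_mul, one_mul, mul_add, mul_one, Polynomial.coeff_add, Polynomial.coeff_X_mul,
    coeff_zPochhammer_comp_C_mul_X, ← mul_assoc, Polynomial.coeff_mul_X,
    Polynomial.coeff_mul_C] at h
  linear_combination -h

lemma qPochhammer_succ (a : A) (m : ℕ) :
    qPochhammer a (m + 1) = qPochhammer a m * (1 - a ^ (m + 1)) :=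
  Finset.prod_range_succ _ _

/-- The finite `q`-binomial theorem, read modulo `a ^ R`. -/
lemma coeff_zPochhammer_mul_qPochhammer (a : A) (R m : ℕ) :
    (zPochhammer a R).coeff m * qPochhammer a m ≡ a ^ m.choose 2 [SMOD Ideal.span {a ^ R}] := by
  induction m with
  | zero =>
    simp [qPochhammer, zPochhammer, Polynomial.coeff_zero_eq_eval_zero, Polynomial.eval_prod]
  | succ m ih =>
    have hR : a ^ R * ((zPochhammer a R).coeff m * qPochhammer a m) ≡ 0
        [SMOD Ideal.span {a ^ R}] :=
      SModEq.zero.2 (Ideal.mul_mem_right _ _ (Ideal.mem_span_singleton_self _))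
    calc (zPochhammer a R).coeff (m + 1) * qPochhammer a (m + 1)
        = a ^ m * ((zPochhammer a R).coeff m * qPochhammer a m) -
            a ^ R * ((zPochhammer a R).coeff m * qPochhammer a m) := by
          rw [qPochhammer_succ]
          linear_combination qPochhammer a m * coeff_zPochhammer_succ_mul a R m
      _ ≡ a ^ m * a ^ m.choose 2 - 0 [SMOD Ideal.span {a ^ R}] :=
          (SModEq.rfl.mul ih).sub hR
      _ = a ^ (m + 1).choose 2 := by
          rw [Nat.choose_succ_succ', Nat.choose_one_right, pow_add, sub_zero]

lemma coeff_zPochhammer_smodEq (a : A) (R m : ℕ) (hu : IsUnit (qPochhammer a m)) :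
    (zPochhammer a R).coeff m ≡ a ^ m.choose 2 * Ring.inverse (qPochhammer a m)
      [SMOD Ideal.span {a ^ R}] := by
  simpa [mul_assoc, Ring.mul_inverse_cancel _ hu] using
    (coeff_zPochhammer_mul_qPochhammer a R m).mul
      (SModEq.refl (Ring.inverse (qPochhammer a m)))

lemma zPochhammer_mul (a : A) (k R : ℕ) :
    zPochhammer a (k * R) = ∏ r ∈ Finset.range k,
      (zPochhammer (a ^ k) R).comp (Polynomial.C (a ^ r) * Polynomial.X) := by
  simp only [zPochhammer_comp_C_mul_X]
  induction R with
  | zero => simp [zPochhammer]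
  | succ R ih =>
    rw [Nat.mul_succ, zPochhammer, Finset.prod_range_add, ← zPochhammer, ih]
    simp only [Finset.prod_range_succ _ R, Finset.prod_mul_distrib, ← pow_mul, ← pow_add]

lemma qPochhammer_smodEq_of_le (a : A) {m m' : ℕ} (h : m ≤ m') :
    qPochhammer a m' ≡ qPochhammer a m [SMOD Ideal.span {a ^ (m + 1)}] := by
  rw [qPochhammer, qPochhammer, ← Finset.prod_range_mul_prod_Ico _ h]
  have h1 : ∏ k ∈ Finset.Ico m m', (1 - a ^ (k + 1)) ≡ ∏ _k ∈ Finset.Ico m m', (1 : A)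
      [SMOD Ideal.span {a ^ (m + 1)}] := SModEq.prod fun k hk => by
    rw [SModEq.sub_mem, sub_sub_cancel_left, neg_mem_iff, Ideal.mem_span_singleton]
    exact pow_dvd_pow a (by simpa using (Finset.mem_Ico.1 hk).1)
  simpa using SModEq.rfl.mul h1

end Pochhammer

section XAdic

variable {R : Type*} [CommRing R]

lemma PowerSeries.smodEq_X_pow_iff {N : ℕ} {f g : R⟦X⟧} :
    f ≡ g [SMOD Ideal.span {(X : R⟦X⟧) ^ N}] ↔ ∀ i < N, coeff i f = coeff i g := by
  simp [SModEq.sub_mem, Ideal.mem_span_singleton, X_pow_dvd_iff, sub_eq_zero]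

lemma PowerSeries.eq_of_forall_smodEq_X_pow {f g : R⟦X⟧}
    (h : ∀ N, f ≡ g [SMOD Ideal.span {(X : R⟦X⟧) ^ N}]) : f = g :=
  ext fun i => smodEq_X_pow_iff.1 (h (i + 1)) i i.lt_succ_self

lemma PowerSeries.smodEq_X_pow_of_le {N N' : ℕ} (h : N ≤ N')
    {f g : R⟦X⟧} (hfg : f ≡ g [SMOD Ideal.span {(X : R⟦X⟧) ^ N'}]) :
    f ≡ g [SMOD Ideal.span {(X : R⟦X⟧) ^ N}] :=
  hfg.mono (Ideal.span_singleton_le_span_singleton.2 (pow_dvd_pow X h))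

lemma PowerSeries.smodEq_of_X_pow_mul {k N : ℕ} {f g : R⟦X⟧}
    (h : X ^ k * f ≡ X ^ k * g [SMOD Ideal.span {(X : R⟦X⟧) ^ (k + N)}]) :
    f ≡ g [SMOD Ideal.span {(X : R⟦X⟧) ^ N}] := by
  rw [smodEq_X_pow_iff] at h ⊢
  intro i hi
  simpa [coeff_X_pow_mul'] using h (k + i) (by omega)

lemma PowerSeries.X_pow_mul_smodEq {k N : ℕ} {f g : R⟦X⟧}
    (h : k < N → f ≡ g [SMOD Ideal.span {(X : R⟦X⟧) ^ N}]) :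
    X ^ k * f ≡ X ^ k * g [SMOD Ideal.span {(X : R⟦X⟧) ^ N}] := by
  by_cases hk : k < N
  · exact SModEq.rfl.mul (h hk)
  · rw [SModEq.sub_mem, ← mul_sub, Ideal.mem_span_singleton]
    exact (pow_dvd_pow X (not_lt.1 hk)).mul_right _

lemma PowerSeries.expand_smodEq (p : ℕ) (hp : p ≠ 0) {N : ℕ} {f g : R⟦X⟧}
    (h : f ≡ g [SMOD Ideal.span {(X : R⟦X⟧) ^ N}]) :
    expand p hp f ≡ expand p hp g [SMOD Ideal.span {(X : R⟦X⟧) ^ N}] := by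
  rw [smodEq_X_pow_iff] at h ⊢
  intro i hi
  simp only [coeff_expand]
  split_ifs
  exacts [h _ ((Nat.div_le_self i p).trans_lt hi), rfl]

lemma PowerSeries.isUnit_qPochhammer_X_pow {k : ℕ} (hk : k ≠ 0) (m : ℕ) :
    IsUnit (qPochhammer ((X : R⟦X⟧) ^ k) m) := by
  simp [isUnit_iff_constantCoeff, qPochhammer, hk]

lemma PowerSeries.qPochhammer_X_pow (k : ℕ) (hk : k ≠ 0) (m : ℕ) :
    qPochhammer ((X : R⟦X⟧) ^ k) m = expand k hk (qPochhammer X m) := by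
  simp [qPochhammer, map_prod, ← pow_mul]

end XAdic

lemma substPow_eq_expand {k : ℕ} (hk : k ≠ 0) (f : ℤ⟦X⟧) : substPow k f = expand k hk f := by
  ext n
  simp [substPow, coeff_expand]

lemma eulerQ_smodEq (m : ℕ) :
    eulerQ ≡ qPochhammer X m [SMOD Ideal.span {(X : ℤ⟦X⟧) ^ (m + 1)}] := by
  refine smodEq_X_pow_iff.2 fun i hi => ?_
  rw [eulerQ, coeff_mk]
  change coeff i (qPochhammer (X : ℤ⟦X⟧) (i + 1)) = _
  rcases le_total (i + 1) m with h | h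
  · exact smodEq_X_pow_iff.1 (qPochhammer_smodEq_of_le (X : ℤ⟦X⟧) h).symm i (by omega)
  · exact smodEq_X_pow_iff.1 (qPochhammer_smodEq_of_le (X : ℤ⟦X⟧) h) i hi

lemma isUnit_eulerQ : IsUnit eulerQ := by
  rw [isUnit_iff_constantCoeff, ← coeff_zero_eq_constantCoeff_apply,
    smodEq_X_pow_iff.1 (eulerQ_smodEq 0) 0 one_pos]
  simp [qPochhammer]

lemma inverse_qPochhammer_X_pow_smodEq {k : ℕ} (hk : k ≠ 0) (m : ℕ) :
    Ring.inverse (qPochhammer ((X : ℤ⟦X⟧) ^ k) m) ≡ expand k hk (Ring.inverse eulerQ)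
      [SMOD Ideal.span {(X : ℤ⟦X⟧) ^ (m + 1)}] := by
  refine SModEq.of_mul_eq_one ?_ (Ring.mul_inverse_cancel _ (isUnit_qPochhammer_X_pow hk m))
    (by rw [← map_mul, Ring.mul_inverse_cancel _ isUnit_eulerQ, map_one])
  rw [qPochhammer_X_pow k hk]
  exact expand_smodEq k hk (eulerQ_smodEq m).symm

def cubicForm {R : Type*} [CommRing R] (p : R × R) : R :=
  p.1 ^ 2 + p.1 * p.2 + p.2 ^ 2

/-- `cubicForm (3 * y + 1, 3 * x) = 3 * shiftedCubicForm (x, y) + 1`. -/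
def shiftedCubicForm (p : ℤ × ℤ) : ℤ :=
  3 * cubicForm p + p.1 + 2 * p.2

/-- `c(q) = 3 q^{1/3} · cubicC(q)` for the Borweins' cubic theta function `c`. -/
noncomputable def cubicC : ℤ⟦X⟧ :=
  mk fun j => (Set.ncard {p : ℤ × ℤ | shiftedCubicForm p = j} : ℤ)

lemma shiftedCubicForm_nonneg (p : ℤ × ℤ) : 0 ≤ shiftedCubicForm p := by
  unfold shiftedCubicForm cubicForm
  nlinarith [sq_nonneg (3 * (p.1 + 2 * p.2) + 2), sq_nonneg p.1]

lemma abs_le_of_shiftedCubicForm_le {p : ℤ × ℤ} {j : ℤ} (h : shiftedCubicForm p ≤ j) :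
    |p.1| ≤ j + 1 ∧ |p.2| ≤ j + 1 := by
  have h0 := (shiftedCubicForm_nonneg p).trans h
  unfold shiftedCubicForm cubicForm at h
  obtain ⟨x, y⟩ := p
  simp only [abs_le]
  refine ⟨⟨?_, ?_⟩, ?_, ?_⟩
  · nlinarith [sq_nonneg (3 * (x + 2 * y) + 2), sq_nonneg (x + (j + 1)), sq_nonneg x]
  · nlinarith [sq_nonneg (3 * (x + 2 * y) + 2), sq_nonneg (x - (j + 1)), sq_nonneg x]
  · nlinarith [sq_nonneg (2 * x + y), sq_nonneg (3 * y + 1), sq_nonneg (y + (j + 1)), sq_nonneg y]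
  · nlinarith [sq_nonneg (2 * x + y), sq_nonneg (3 * y + 1), sq_nonneg (y - (j + 1)), sq_nonneg y]

/-- The exponent of `q` in the `(a, b, c)` term of the coefficient of `z^{3M}` in
`(-z; q³)_R (-qz; q³)_R (-q²z; q³)_R`. -/
lemma choose_two_add_shiftedCubicForm {a b c M : ℕ} (h : a + b + c = 3 * M) :
    b + 2 * c + 3 * (a.choose 2 + b.choose 2 + c.choose 2) =
      (3 * M).choose 2 + (shiftedCubicForm ((b : ℤ) - M, (c : ℤ) - M)).toNat := by
  have hs := shiftedCubicForm_nonneg ((b : ℤ) - M, (c : ℤ) - M)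
  have ha : (a : ℚ) = 3 * M - b - c := by
    have : (a : ℚ) + b + c = 3 * M := by exact_mod_cast h
    linarith
  have key : ((b + 2 * c + 3 * (a.choose 2 + b.choose 2 + c.choose 2) : ℕ) : ℚ) =
      ((3 * M).choose 2 : ℕ) + ((shiftedCubicForm ((b : ℤ) - M, (c : ℤ) - M) : ℤ) : ℚ) := by
    push_cast [Nat.cast_choose_two, shiftedCubicForm, cubicForm]
    rw [ha]
    ring
  have key' : ((b + 2 * c + 3 * (a.choose 2 + b.choose 2 + c.choose 2) : ℕ) : ℤ) =
      ((3 * M).choose 2 : ℕ) + shiftedCubicForm ((b : ℤ) - M, (c : ℤ) - M) := by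
    exact_mod_cast key
  omega

lemma coeff_sum_X_pow_shiftedCubicForm {M j : ℕ} (hj : 2 * j + 2 ≤ M) :
    coeff j (∑ p ∈ antidiagonal (3 * M), ∑ q ∈ antidiagonal p.2,
      (X : ℤ⟦X⟧) ^ (shiftedCubicForm ((q.1 : ℤ) - M, (q.2 : ℤ) - M)).toNat) = coeff j cubicC := by
  rw [Finset.sum_sigma', map_sum]
  simp only [coeff_X_pow]
  rw [Finset.sum_boole, cubicC, coeff_mk, ← Set.ncard_coe_finset]
  congr 1
  apply Set.ncard_congr (fun t _ => ((t.2.1 : ℤ) - M, (t.2.2 : ℤ) - M))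
  · rintro ⟨⟨a, s⟩, b, c⟩ ht
    simp only [Finset.coe_filter, Set.mem_ofPred_eq] at ht ⊢
    have := shiftedCubicForm_nonneg ((b : ℤ) - M, (c : ℤ) - M)
    omega
  · rintro ⟨⟨a, s⟩, b, c⟩ ⟨⟨a', s'⟩, b', c'⟩ ht ht' he
    simp only [Finset.coe_filter, Finset.mem_sigma, mem_antidiagonal, Set.mem_ofPred_eq,
      Prod.mk.injEq] at ht ht' he
    have hb : b = b' := by omega
    have hc : c = c' := by omega
    subst hb hc
    obtain rfl : s = s' := by omega
    obtain rfl : a = a' := by omega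
    rfl
  · rintro ⟨x, y⟩ hxy
    simp only [Set.mem_ofPred_eq] at hxy
    obtain ⟨hx, hy⟩ := abs_le_of_shiftedCubicForm_le hxy.le
    rw [abs_le] at hx hy
    refine ⟨⟨⟨3 * M - ((M + x).toNat + (M + y).toNat), (M + x).toNat + (M + y).toNat⟩,
      (M + x).toNat, (M + y).toNat⟩, ?_, ?_⟩
    · simp only [Finset.coe_filter, Finset.mem_sigma, mem_antidiagonal, Set.mem_ofPred_eq]
      refine ⟨⟨by omega, trivial⟩, ?_⟩
      rw [show ((M + x).toNat : ℤ) - M = x by omega, show ((M + y).toNat : ℤ) - M = y by omega,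
        hxy, Int.toNat_natCast]
    · simp only [Prod.mk.injEq]
      omega

/-- Compare the coefficients of `z^{3M}` in `(-z; q)_{3R} = (-z; q³)_R (-qz; q³)_R (-q²z; q³)_R`,
evaluating all four of them by the finite `q`-binomial theorem. -/
lemma X_pow_mul_inverse_qPochhammer_smodEq (R M : ℕ) :
    X ^ (3 * M).choose 2 * Ring.inverse (qPochhammer (X : ℤ⟦X⟧) (3 * M)) ≡
      ∑ p ∈ antidiagonal (3 * M), ∑ q ∈ antidiagonal p.2,
        X ^ (3 * M).choose 2 * (X ^ (shiftedCubicForm ((q.1 : ℤ) - M, (q.2 : ℤ) - M)).toNat *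
          (Ring.inverse (qPochhammer ((X : ℤ⟦X⟧) ^ 3) p.1) *
            (Ring.inverse (qPochhammer ((X : ℤ⟦X⟧) ^ 3) q.1) *
              Ring.inverse (qPochhammer ((X : ℤ⟦X⟧) ^ 3) q.2))))
      [SMOD Ideal.span {(X : ℤ⟦X⟧) ^ (3 * R)}] := by
  have hsplit : zPochhammer (X : ℤ⟦X⟧) (3 * R) = zPochhammer (X ^ 3) R *
      ((zPochhammer (X ^ 3) R).comp (Polynomial.C X * Polynomial.X) *
        (zPochhammer (X ^ 3) R).comp (Polynomial.C (X ^ 2) * Polynomial.X)) := by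
    simp [zPochhammer_mul X 3 R, Finset.prod_range_succ, mul_assoc]
  have hL := coeff_zPochhammer_smodEq (X : ℤ⟦X⟧) (3 * R) (3 * M)
    (by simpa using isUnit_qPochhammer_X_pow (R := ℤ) one_ne_zero (3 * M))
  rw [hsplit, Polynomial.coeff_mul] at hL
  have hε (m : ℕ) : (zPochhammer ((X : ℤ⟦X⟧) ^ 3) R).coeff m ≡
      X ^ (3 * m.choose 2) * Ring.inverse (qPochhammer (X ^ 3) m)
      [SMOD Ideal.span {(X : ℤ⟦X⟧) ^ (3 * R)}] := by
    simpa [← pow_mul] using coeff_zPochhammer_smodEq ((X : ℤ⟦X⟧) ^ 3) R m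
      (isUnit_qPochhammer_X_pow three_ne_zero m)
  refine hL.symm.trans (SModEq.sum fun p hp => ?_)
  rw [Polynomial.coeff_mul, Finset.mul_sum]
  refine SModEq.sum fun q hq => ?_
  rw [mem_antidiagonal] at hp hq
  simp only [coeff_zPochhammer_comp_C_mul_X]
  refine ((hε p.1).mul (((hε q.1).mul SModEq.rfl).mul ((hε q.2).mul SModEq.rfl))).trans ?_
  rw [← mul_assoc (X ^ _) (X ^ _), ← pow_add,
    ← choose_two_add_shiftedCubicForm (a := p.1) (by omega)]
  exact SModEq.def.2 (congrArg _ (by ring))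

lemma inverse_eulerQ_smodEq (N : ℕ) :
    Ring.inverse eulerQ ≡ cubicC * expand 3 three_ne_zero (Ring.inverse eulerQ) ^ 3
      [SMOD Ideal.span {(X : ℤ⟦X⟧) ^ N}] := by
  -- With `M = 3N`, a term whose exponent `f q` is below `N` has `p.1, q.1, q.2 ≥ N`.
  set M := 3 * N
  set K := (3 * M).choose 2
  set V := expand 3 three_ne_zero (Ring.inverse eulerQ)
  set W := fun m => Ring.inverse (qPochhammer ((X : ℤ⟦X⟧) ^ 3) m)
  set f := fun q : ℕ × ℕ => (shiftedCubicForm ((q.1 : ℤ) - M, (q.2 : ℤ) - M)).toNat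
  have hsum : Ring.inverse (qPochhammer (X : ℤ⟦X⟧) (3 * M)) ≡
      ∑ p ∈ antidiagonal (3 * M), ∑ q ∈ antidiagonal p.2, X ^ f q * (W p.1 * (W q.1 * W q.2))
      [SMOD Ideal.span {(X : ℤ⟦X⟧) ^ N}] := by
    have h := X_pow_mul_inverse_qPochhammer_smodEq (K + N) M
    simp only [← Finset.mul_sum] at h
    exact smodEq_of_X_pow_mul (smodEq_X_pow_of_le (by omega) h)
  have hL : Ring.inverse (qPochhammer (X : ℤ⟦X⟧) (3 * M)) ≡ Ring.inverse eulerQ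
      [SMOD Ideal.span {(X : ℤ⟦X⟧) ^ N}] := by
    simpa using smodEq_X_pow_of_le (by omega) (inverse_qPochhammer_X_pow_smodEq one_ne_zero (3 * M))
  have hterm : ∀ p ∈ antidiagonal (3 * M), ∀ q ∈ antidiagonal p.2,
      X ^ f q * (W p.1 * (W q.1 * W q.2)) ≡ X ^ f q * V ^ 3 [SMOD Ideal.span {(X : ℤ⟦X⟧) ^ N}] := by
    intro p hp q hq
    rw [mem_antidiagonal] at hp hq
    refine X_pow_mul_smodEq fun hf => ?_
    have hfq : (f q : ℤ) = shiftedCubicForm ((q.1 : ℤ) - M, (q.2 : ℤ) - M) :=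
      Int.toNat_of_nonneg (shiftedCubicForm_nonneg _)
    obtain ⟨hx, hy⟩ := abs_le_of_shiftedCubicForm_le hfq.symm.le
    rw [abs_le] at hx hy
    have hW : ∀ m, N ≤ m + 1 → W m ≡ V [SMOD Ideal.span {(X : ℤ⟦X⟧) ^ N}] := fun m hm =>
      smodEq_X_pow_of_le hm (inverse_qPochhammer_X_pow_smodEq three_ne_zero m)
    rw [pow_three]
    exact (hW _ (by omega)).mul ((hW _ (by omega)).mul (hW _ (by omega)))
  have hcount : ∑ p ∈ antidiagonal (3 * M), ∑ q ∈ antidiagonal p.2, (X : ℤ⟦X⟧) ^ f q ≡ cubicC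
      [SMOD Ideal.span {(X : ℤ⟦X⟧) ^ N}] :=
    smodEq_X_pow_iff.2 fun j hj => coeff_sum_X_pow_shiftedCubicForm (by omega)
  calc Ring.inverse eulerQ
      ≡ ∑ p ∈ antidiagonal (3 * M), ∑ q ∈ antidiagonal p.2, X ^ f q * (W p.1 * (W q.1 * W q.2))
        [SMOD Ideal.span {(X : ℤ⟦X⟧) ^ N}] := hL.symm.trans hsum
    _ ≡ ∑ p ∈ antidiagonal (3 * M), ∑ q ∈ antidiagonal p.2, X ^ f q * V ^ 3
        [SMOD Ideal.span {(X : ℤ⟦X⟧) ^ N}] :=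
      SModEq.sum fun p hp => SModEq.sum fun q hq => hterm p hp q hq
    _ = (∑ p ∈ antidiagonal (3 * M), ∑ q ∈ antidiagonal p.2, X ^ f q) * V ^ 3 := by
      simp only [Finset.sum_mul]
    _ ≡ cubicC * V ^ 3 [SMOD Ideal.span {(X : ℤ⟦X⟧) ^ N}] := hcount.mul SModEq.rfl

/-- The Borweins' identity `c(q) = 3 q^{1/3} (q³; q³)_∞³ / (q; q)_∞`. -/
theorem expand_eulerQ_pow_three :
    expand 3 three_ne_zero eulerQ ^ 3 = cubicC * eulerQ := by
  have hv := eq_of_forall_smodEq_X_pow inverse_eulerQ_smodEq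
  have h1 : eulerQ * Ring.inverse eulerQ = 1 := Ring.mul_inverse_cancel _ isUnit_eulerQ
  have h3 : expand 3 three_ne_zero eulerQ * expand 3 three_ne_zero (Ring.inverse eulerQ) = 1 := by
    rw [← map_mul, h1, map_one]
  calc expand 3 three_ne_zero eulerQ ^ 3
      = expand 3 three_ne_zero eulerQ ^ 3 * (eulerQ * Ring.inverse eulerQ) := by rw [h1, mul_one]
    _ = cubicC * eulerQ *
          (expand 3 three_ne_zero eulerQ * expand 3 three_ne_zero (Ring.inverse eulerQ)) ^ 3 := by
      conv_lhs => rw [hv]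
      ring
    _ = cubicC * eulerQ := by rw [h3, one_pow, mul_one]

def hexRot {R : Type*} [CommRing R] (p : R × R) : R × R := (-p.2, p.1 + p.2)

lemma cubicForm_hexRot {R : Type*} [CommRing R] (p : R × R) :
    cubicForm (hexRot p) = cubicForm p := by
  simp only [cubicForm, hexRot]; ring

lemma hexRot_injective {R : Type*} [CommRing R] : Function.Injective (hexRot : R × R → R × R) := by
  intro p q h
  simp only [hexRot, Prod.mk.injEq, neg_inj] at h
  exact Prod.ext (by linear_combination h.2 - h.1) h.1

lemma hexRot_iterate_six {R : Type*} [CommRing R] : (hexRot : R × R → R × R)^[6] = id := by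
  funext p
  ext <;> simp [hexRot, Function.iterate_succ_apply']

lemma cubicForm_hexRot_iterate {R : Type*} [CommRing R] (k : ℕ) (p : R × R) :
    cubicForm (hexRot^[k] p) = cubicForm p :=
  congrFun (Function.iterate_invariant (g := (cubicForm : R × R → R))
    (funext fun p => cubicForm_hexRot p) k) p

def res3 (p : ℤ × ℤ) : ZMod 3 × ZMod 3 := (p.1, p.2)

lemma res3_hexRot_iterate (k : ℕ) (p : ℤ × ℤ) : res3 (hexRot^[k] p) = hexRot^[k] (res3 p) :=
  Function.Semiconj.iterate_right (fun p => by simp [res3, hexRot]) k p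

lemma hexRot_orbit_one_zero (r : ZMod 3 × ZMod 3) :
    r.1 ≠ r.2 ↔ ∃ k : Fin 6, hexRot^[k] (1, 0) = r := by
  revert r; decide

lemma hexRot_iterate_one_zero_injective :
    Function.Injective fun k : Fin 6 => hexRot^[k] ((1, 0) : ZMod 3 × ZMod 3) := by
  decide

lemma ncard_cubicForm_eq_res3_ne (n : ℤ) :
    Set.ncard {p : ℤ × ℤ | cubicForm p = n ∧ (res3 p).1 ≠ (res3 p).2} =
      6 * Set.ncard {p : ℤ × ℤ | cubicForm p = n ∧ res3 p = (1, 0)} := by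
  rw [show 6 = Set.ncard (Set.univ : Set (Fin 6)) by simp, ← Set.ncard_prod]
  symm
  apply Set.ncard_congr (fun t _ => hexRot^[t.1] t.2)
  · rintro ⟨k, p⟩ ⟨-, hQ, hr⟩
    refine ⟨(cubicForm_hexRot_iterate k p).trans hQ, ?_⟩
    rw [res3_hexRot_iterate, hr]
    exact (hexRot_orbit_one_zero _).2 ⟨k, rfl⟩
  · rintro ⟨k, p⟩ ⟨l, p'⟩ ⟨-, -, hr⟩ ⟨-, -, hr'⟩ h
    have hres := congrArg res3 h
    rw [res3_hexRot_iterate, res3_hexRot_iterate, hr, hr'] at hres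
    obtain rfl : k = l := hexRot_iterate_one_zero_injective hres
    exact Prod.ext rfl (hexRot_injective.iterate k h)
  · rintro p ⟨hQ, hr⟩
    obtain ⟨k, hk⟩ := (hexRot_orbit_one_zero _).1 hr
    have h6 : 6 - (k : ℕ) + k = 6 := Nat.sub_add_cancel k.is_lt.le
    refine ⟨(k, hexRot^[6 - k] p), ⟨trivial, (cubicForm_hexRot_iterate _ p).trans hQ, ?_⟩, ?_⟩
    · rw [res3_hexRot_iterate, ← hk, ← Function.iterate_add_apply, h6, hexRot_iterate_six, id]
    · dsimp only
      rw [← Function.iterate_add_apply, add_comm, h6, hexRot_iterate_six, id]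

lemma res3_fst_eq_snd_iff {p : ℤ × ℤ} : (res3 p).1 = (res3 p).2 ↔ p.1 % 3 = p.2 % 3 :=
  ZMod.intCast_eq_intCast_iff' _ _ 3

lemma res3_eq_one_zero_iff {p : ℤ × ℤ} : res3 p = (1, 0) ↔ p.1 % 3 = 1 ∧ p.2 % 3 = 0 := by
  rw [res3, Prod.mk.injEq, ← Int.cast_one, ← Int.cast_zero, ZMod.intCast_eq_intCast_iff',
    ZMod.intCast_eq_intCast_iff']
  rfl

lemma abs_le_of_cubicForm_eq {p : ℤ × ℤ} {n : ℤ} (h : cubicForm p = n) :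
    |p.1| ≤ n + 1 ∧ |p.2| ≤ n + 1 := by
  unfold cubicForm at h
  obtain ⟨x, y⟩ := p
  simp only [abs_le]
  refine ⟨⟨?_, ?_⟩, ?_, ?_⟩
  · nlinarith [sq_nonneg (x + 2 * y), sq_nonneg (x + (n + 1)), sq_nonneg x]
  · nlinarith [sq_nonneg (x + 2 * y), sq_nonneg (x - (n + 1)), sq_nonneg x]
  · nlinarith [sq_nonneg (2 * x + y), sq_nonneg (y + (n + 1)), sq_nonneg y]
  · nlinarith [sq_nonneg (2 * x + y), sq_nonneg (y - (n + 1)), sq_nonneg y]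

lemma finite_setOf_cubicForm_eq (n : ℤ) : {p : ℤ × ℤ | cubicForm p = n}.Finite :=
  (Set.finite_Icc (-(n + 1), -(n + 1)) (n + 1, n + 1)).subset fun p hp => by
    obtain ⟨h1, h2⟩ := abs_le_of_cubicForm_eq hp
    exact ⟨Prod.mk_le_mk.2 ⟨(abs_le.1 h1).1, (abs_le.1 h2).1⟩,
      Prod.mk_le_mk.2 ⟨(abs_le.1 h1).2, (abs_le.1 h2).2⟩⟩

lemma ncard_cubicForm_eq_three_mul_res3_eq (t : ℤ) :
    Set.ncard {p : ℤ × ℤ | cubicForm p = 3 * t ∧ (res3 p).1 = (res3 p).2} =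
      Set.ncard {p : ℤ × ℤ | cubicForm p = t} := by
  symm
  apply Set.ncard_congr (fun p _ => (p.1 - p.2, p.1 + 2 * p.2))
  · rintro ⟨x, y⟩ h
    refine ⟨by rw [← h.out]; simp only [cubicForm]; ring, res3_fst_eq_snd_iff.2 (by simp; omega)⟩
  · rintro ⟨x, y⟩ ⟨x', y'⟩ _ _ h
    simp only [Prod.mk.injEq] at h ⊢
    omega
  · rintro ⟨m, p⟩ ⟨hQ, hr⟩
    obtain ⟨k, rfl⟩ : ∃ k, p = m + 3 * k := ⟨(p - m) / 3, by rw [res3_fst_eq_snd_iff] at hr; omega⟩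
    refine ⟨(m + k, k), ?_, by simp only [Prod.mk.injEq]; constructor <;> ring⟩
    have : 3 * cubicForm (m + k, k) = 3 * t := by
      rw [← hQ]; simp only [cubicForm]; ring
    exact Int.eq_of_mul_eq_mul_left three_ne_zero this

lemma ncard_cubicForm_eq_res3_eq_of_not_dvd {n : ℤ} (hn : ¬ 3 ∣ n) :
    Set.ncard {p : ℤ × ℤ | cubicForm p = n ∧ (res3 p).1 = (res3 p).2} = 0 := by
  rw [Set.ncard_eq_zero (finite_setOf_cubicForm_eq n |>.subset fun p hp => hp.1)]
  refine Set.eq_empty_of_forall_notMem fun ⟨m, p⟩ ⟨hQ, hr⟩ => hn ?_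
  obtain ⟨k, rfl⟩ : ∃ k, p = m + 3 * k := ⟨(p - m) / 3, by rw [res3_fst_eq_snd_iff] at hr; omega⟩
  exact ⟨m ^ 2 + 3 * m * k + 3 * k ^ 2, by rw [← hQ]; simp only [cubicForm]; ring⟩

lemma ncard_cubicForm_eq_three_mul_add_one_res3_eq_one_zero (t : ℤ) :
    Set.ncard {p : ℤ × ℤ | cubicForm p = 3 * t + 1 ∧ res3 p = (1, 0)} =
      Set.ncard {p : ℤ × ℤ | shiftedCubicForm p = t} := by
  symm
  apply Set.ncard_congr (fun c _ => (3 * c.2 + 1, 3 * c.1))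
  · rintro ⟨x, y⟩ h
    refine ⟨by rw [← h.out]; simp only [shiftedCubicForm, cubicForm]; ring,
      res3_eq_one_zero_iff.2 (by simp)⟩
  · rintro ⟨x, y⟩ ⟨x', y'⟩ _ _ h
    simp only [Prod.mk.injEq] at h ⊢
    omega
  · rintro ⟨m, p⟩ ⟨hQ, hr⟩
    rw [res3_eq_one_zero_iff] at hr
    obtain ⟨y, rfl⟩ : ∃ y, m = 3 * y + 1 := ⟨(m - 1) / 3, by omega⟩
    obtain ⟨x, rfl⟩ : ∃ x, p = 3 * x := ⟨p / 3, by omega⟩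
    refine ⟨(x, y), ?_, rfl⟩
    have : 3 * shiftedCubicForm (x, y) + 1 = 3 * t + 1 := by
      rw [← hQ]; simp only [shiftedCubicForm, cubicForm]; ring
    change shiftedCubicForm (x, y) = t
    omega

lemma ncard_cubicForm_eq_res3_eq_one_zero_of_emod {n : ℤ} (hn : n % 3 ≠ 1) :
    Set.ncard {p : ℤ × ℤ | cubicForm p = n ∧ res3 p = (1, 0)} = 0 := by
  rw [Set.ncard_eq_zero (finite_setOf_cubicForm_eq n |>.subset fun p hp => hp.1)]
  refine Set.eq_empty_of_forall_notMem fun ⟨m, p⟩ ⟨hQ, hr⟩ => hn ?_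
  rw [res3_eq_one_zero_iff] at hr
  obtain ⟨y, rfl⟩ : ∃ y, m = 3 * y + 1 := ⟨(m - 1) / 3, by omega⟩
  obtain ⟨x, rfl⟩ : ∃ x, p = 3 * x := ⟨p / 3, by omega⟩
  have : n = 3 * shiftedCubicForm (x, y) + 1 := by
    rw [← hQ]; simp only [shiftedCubicForm, cubicForm]; ring
  omega

lemma coeff_aCubic (n : ℕ) : coeff n aCubic = Set.ncard {p : ℤ × ℤ | cubicForm p = n} := by
  rw [aCubic, coeff_mk]
  rfl

noncomputable def aCubicCoset : ℤ⟦X⟧ :=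
  mk fun n => (Set.ncard {p : ℤ × ℤ | cubicForm p = n ∧ res3 p = (1, 0)} : ℤ)

lemma aCubic_eq : aCubic = expand 3 three_ne_zero aCubic + 6 * aCubicCoset := by
  ext n
  rw [map_add, coeff_expand, ← map_ofNat C 6, coeff_C_mul, coeff_aCubic, aCubicCoset, coeff_mk,
    ← Set.ncard_inter_add_ncard_sdiff_eq_ncard _ {p | (res3 p).1 = (res3 p).2}
      (finite_setOf_cubicForm_eq n),
    ← Set.ofPred_and, Set.sdiff_eq, Set.compl_ofPred, ← Set.ofPred_and,
    ncard_cubicForm_eq_res3_ne]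
  split_ifs with h3
  · obtain ⟨t, rfl⟩ := h3
    rw [coeff_aCubic, Nat.mul_div_cancel_left t three_pos, Nat.cast_mul, Nat.cast_ofNat,
      ncard_cubicForm_eq_three_mul_res3_eq]
    push_cast
    ring
  · rw [ncard_cubicForm_eq_res3_eq_of_not_dvd (by exact_mod_cast h3)]
    push_cast
    ring

lemma aCubicCoset_eq : aCubicCoset = X * expand 3 three_ne_zero cubicC := by
  ext n
  rcases n with _ | k
  · rw [aCubicCoset, coeff_mk, ncard_cubicForm_eq_res3_eq_one_zero_of_emod (by decide)]
    simp
  · rw [coeff_succ_X_mul, coeff_expand, aCubicCoset, coeff_mk]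
    split_ifs with h3
    · obtain ⟨t, rfl⟩ := h3
      rw [Nat.mul_div_cancel_left t three_pos, cubicC, coeff_mk, Nat.cast_add, Nat.cast_mul,
        Nat.cast_ofNat, Nat.cast_one, ncard_cubicForm_eq_three_mul_add_one_res3_eq_one_zero]
    · rw [ncard_cubicForm_eq_res3_eq_one_zero_of_emod (by omega), Nat.cast_zero]

lemma aCubicCoset_mul_expand_eulerQ :
    aCubicCoset * expand 3 three_ne_zero eulerQ =
      X * expand 9 (by norm_num) eulerQ ^ 3 := by
  rw [aCubicCoset_eq, mul_assoc, ← map_mul, ← expand_eulerQ_pow_three, map_pow,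
    ← expand_mul 3 three_ne_zero 3 three_ne_zero]

/-- `a(q)⁶·(q³;q³)_∞ ≡ a(q³)⁶·(q³;q³)_∞ + 9q·a(q³)⁵·(q⁹;q⁹)_∞³ (mod 27)`
coefficientwise. -/
theorem aCubic_pow_six_congr (n : ℕ) :
    PowerSeries.coeff n (aCubic ^ 6 * substPow 3 eulerQ) ≡
      PowerSeries.coeff n
        ((substPow 3 aCubic) ^ 6 * substPow 3 eulerQ +
          9 * PowerSeries.X * (substPow 3 aCubic) ^ 5 * (substPow 9 eulerQ) ^ 3)
      [ZMOD 27] := by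
  simp only [substPow_eq_expand three_ne_zero, substPow_eq_expand (show 9 ≠ 0 by norm_num)]
  set A := expand 3 three_ne_zero aCubic
  set D := aCubicCoset
  -- `(A + 6D)⁶ - A⁶ - 36 A⁵ D` is divisible by 27, and `36 = 9 + 27`.
  have key : aCubic ^ 6 * expand 3 three_ne_zero eulerQ =
      A ^ 6 * expand 3 three_ne_zero eulerQ + 9 * X * A ^ 5 * expand 9 (by norm_num) eulerQ ^ 3 +
        C 27 * (X * A ^ 5 * expand 9 (by norm_num) eulerQ ^ 3 +
          (20 * A ^ 4 * D ^ 2 + 160 * A ^ 3 * D ^ 3 + 720 * A ^ 2 * D ^ 4 + 1728 * A * D ^ 5 +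
            1728 * D ^ 6) * expand 3 three_ne_zero eulerQ) := by
    rw [aCubic_eq, map_ofNat C 27]
    linear_combination (36 * A ^ 5) * aCubicCoset_mul_expand_eulerQ
  rw [key, map_add, coeff_C_mul]
  exact Int.modEq_add_fac_self
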